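/- arXiv:cs/0010007 — 3 statements merged into one kernel-verified Lean document; each statement's English description precedes it below -/
import Mathlib

section
/- Throw m balls independently and uniformly at random into n bins (a uniformly random function f from Fin m to Fin n). Let Y be the number of empty bins and let μ = E[Y] = n·(1 - 1/n)^m. Then for every real λ > 0, the probability that |Y - μ| ≥ λ is at most 2·exp(−(λ²·(n−1)/2)/(n² − μ²)). -/
open Finset Real

lemma emptyFilter_cons (m n : ℕ) (g : Fin m → Fin n) (x : Fin n) :
    (Finset.univ.filter (fun j : Fin n =>
        ∀ t : Fin (m+1), (Fin.cons x g : Fin (m+1) → Fin n) t ≠ j))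
      = (Finset.univ.filter (fun j : Fin n => ∀ t : Fin m, g t ≠ j)).erase x := by
  ext j
  simp only [Finset.mem_filter, Finset.mem_erase, Finset.mem_univ, true_and]
  constructor
  · intro h
    refine ⟨fun hxj => h 0 (by simp [hxj]), fun t => ?_⟩
    simpa using h t.succ
  · rintro ⟨hx, hg⟩ t
    refine Fin.cases ?_ ?_ t
    · simpa using fun h => hx h.symm
    · intro i; simpa using hg i

lemma exp_convex_bound (t x : ℝ) (hx : |x| ≤ 1) :
    Real.exp (t * x) ≤ Real.cosh t + x * Real.sinh t := by
  have h1 : 0 ≤ (1 + x) / 2 := by cases abs_le.1 hx; linarith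
  have h2 : 0 ≤ (1 - x) / 2 := by cases abs_le.1 hx; linarith
  have h3 : (1 + x) / 2 + (1 - x) / 2 = 1 := by ring
  have := convexOn_exp.2 (Set.mem_univ t) (Set.mem_univ (-t)) h1 h2 h3
  simp only [smul_eq_mul] at this
  have he : (1 + x) / 2 * t + (1 - x) / 2 * (-t) = t * x := by ring
  rw [he] at this
  calc Real.exp (t * x) ≤ (1 + x) / 2 * Real.exp t + (1 - x) / 2 * Real.exp (-t) := this
    _ = Real.cosh t + x * Real.sinh t := by rw [Real.cosh_eq, Real.sinh_eq]; ring

lemma bernoulli_mgf (p t : ℝ) (hp0 : 0 ≤ p) (hp1 : p ≤ 1) :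
    p * Real.exp t + (1 - p) ≤ Real.exp (t * p + t ^ 2 / 2) := by
  have h1 : Real.exp (t * (1 - p)) ≤ Real.cosh t + (1 - p) * Real.sinh t :=
    exp_convex_bound t (1 - p) (by rw [abs_le]; constructor <;> linarith)
  have h2 : Real.exp (t * (-p)) ≤ Real.cosh t + (-p) * Real.sinh t :=
    exp_convex_bound t (-p) (by rw [abs_le]; constructor <;> linarith)
  have hc : Real.cosh t ≤ Real.exp (t ^ 2 / 2) := Real.cosh_le_exp_half_sq t
  have key : p * Real.exp (t * (1 - p)) + (1 - p) * Real.exp (t * (-p))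
      ≤ Real.exp (t ^ 2 / 2) := by nlinarith [Real.exp_pos (t * (1-p)), Real.exp_pos (t * (-p))]
  have expand : p * Real.exp t + (1 - p)
      = Real.exp (t * p) * (p * Real.exp (t * (1 - p)) + (1 - p) * Real.exp (t * (-p))) := by
    rw [mul_add]
    rw [show Real.exp (t*p) * (p * Real.exp (t*(1-p))) = p * (Real.exp (t*p) * Real.exp (t*(1-p))) by ring,
        ← Real.exp_add, show t*p + t*(1-p) = t by ring,
        show Real.exp (t*p) * ((1-p) * Real.exp (t*(-p))) = (1-p) * (Real.exp (t*p) * Real.exp (t*(-p))) by ring,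
        ← Real.exp_add, show t*p + t*(-p) = 0 by ring, Real.exp_zero, mul_one]
  rw [expand, Real.exp_add]
  exact mul_le_mul_of_nonneg_left key (le_of_lt (Real.exp_pos _))

lemma mgf_bound (n : ℕ) (hn : 1 ≤ n) : ∀ (m : ℕ) (s : ℝ),
    ∑ f : Fin m → Fin n,
        Real.exp (s * ((Finset.univ.filter (fun j : Fin n => ∀ t : Fin m, f t ≠ j)).card : ℝ))
      ≤ (n : ℝ) ^ m * Real.exp (s * n * (1 - 1/(n:ℝ)) ^ m
          + s ^ 2 / 2 * ∑ i ∈ Finset.range m, (1 - 1/(n:ℝ)) ^ (2 * i)) := by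
  have hn0 : 0 < (n : ℝ) := by exact_mod_cast hn
  intro m
  induction m with
  | zero =>
    intro s
    rw [Fintype.sum_unique]
    simp [Finset.filter_true_of_mem]
  | succ m ih =>
    intro s
    set q : ℝ := 1 - 1/(n:ℝ) with hq
    set E : (Fin m → Fin n) → Finset (Fin n) :=
      fun g => Finset.univ.filter (fun j : Fin n => ∀ t : Fin m, g t ≠ j) with hE
    have hsum : ∑ f : Fin (m+1) → Fin n,
        Real.exp (s * ((Finset.univ.filter (fun j : Fin n => ∀ t : Fin (m+1), f t ≠ j)).card : ℝ))
        = ∑ g : Fin m → Fin n, ∑ x : Fin n,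
            Real.exp (s * (((E g).erase x).card : ℝ)) := by
      rw [← (Fin.consEquiv (fun _ : Fin (m+1) => Fin n)).sum_comp, Fintype.sum_prod_type,
        Finset.sum_comm]
      refine Finset.sum_congr rfl fun g _ => Finset.sum_congr rfl fun x _ => ?_
      rw [show (Fin.consEquiv (fun _ : Fin (m+1) => Fin n)) (x, g)
            = (Fin.cons x g : Fin (m+1) → Fin n) from rfl, emptyFilter_cons]
    have inner_bound : ∀ g : Fin m → Fin n,
        ∑ x : Fin n, Real.exp (s * (((E g).erase x).card : ℝ))
          ≤ (n : ℝ) * Real.exp (s ^ 2 / 2) * Real.exp ((s * q) * ((E g).card : ℝ)) := by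
      intro g
      set e : ℕ := (E g).card with he
      have hen : e ≤ n := by
        simpa using Finset.card_le_card (Finset.subset_univ (E g))
      have hA : ∑ x ∈ E g, Real.exp (s * (((E g).erase x).card : ℝ))
          = (e : ℝ) * Real.exp (s * ((e : ℝ) - 1)) := by
        have hterm : ∀ x ∈ E g, Real.exp (s * (((E g).erase x).card : ℝ))
            = Real.exp (s * ((e : ℝ) - 1)) := by
          intro x hx
          have h1 : 1 ≤ e := Finset.card_pos.2 ⟨x, hx⟩
          rw [Finset.card_erase_of_mem hx]
          congr 2
          rw [Nat.cast_sub h1, Nat.cast_one]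
        rw [Finset.sum_congr rfl hterm, Finset.sum_const, nsmul_eq_mul]
      have hB : ∑ x ∈ (E g)ᶜ, Real.exp (s * (((E g).erase x).card : ℝ))
          = ((n : ℝ) - e) * Real.exp (s * (e : ℝ)) := by
        have hterm : ∀ x ∈ (E g)ᶜ, Real.exp (s * (((E g).erase x).card : ℝ))
            = Real.exp (s * (e : ℝ)) := by
          intro x hx
          rw [Finset.erase_eq_of_notMem (by simpa using hx)]
        rw [Finset.sum_congr rfl hterm, Finset.sum_const, nsmul_eq_mul, Finset.card_compl]
        simp [← he, Nat.cast_sub hen]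
      have hinner : ∑ x : Fin n, Real.exp (s * (((E g).erase x).card : ℝ))
          = (e : ℝ) * Real.exp (s * ((e : ℝ) - 1)) + ((n : ℝ) - e) * Real.exp (s * e) := by
        rw [← Finset.sum_add_sum_compl (E g), hA, hB]
      rw [hinner]
      have hp0 : (0:ℝ) ≤ (e : ℝ) / n := by positivity
      have hp1 : (e : ℝ) / n ≤ 1 := by
        rw [div_le_one hn0]; exact_mod_cast hen
      have hb := bernoulli_mgf ((e:ℝ)/n) (-s) hp0 hp1
      have key : (e : ℝ) * Real.exp (-s) + ((n:ℝ) - e)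
          ≤ (n : ℝ) * Real.exp (-s * ((e:ℝ)/n) + s ^ 2 / 2) := by
        have h2 := mul_le_mul_of_nonneg_left hb (le_of_lt hn0)
        have h3 : (e : ℝ) * Real.exp (-s) + ((n:ℝ) - e)
            = (n:ℝ) * (((e:ℝ)/n) * Real.exp (-s) + (1 - (e:ℝ)/n)) := by
          field_simp
        have h4 : (-s) ^ 2 = s ^ 2 := by ring
        rw [h3]
        rw [h4] at h2
        exact h2
      calc (e : ℝ) * Real.exp (s * ((e : ℝ) - 1)) + ((n : ℝ) - e) * Real.exp (s * e)
          = Real.exp (s * e) * ((e : ℝ) * Real.exp (-s) + ((n:ℝ) - e)) := by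
            rw [show s * ((e:ℝ) - 1) = s * e + (-s) by ring, Real.exp_add]; ring
        _ ≤ Real.exp (s * e) * ((n : ℝ) * Real.exp (-s * ((e:ℝ)/n) + s ^ 2 / 2)) :=
            mul_le_mul_of_nonneg_left key (le_of_lt (Real.exp_pos _))
        _ = (n : ℝ) * Real.exp (s ^ 2 / 2) * Real.exp ((s * q) * (e : ℝ)) := by
            rw [show Real.exp (s * ↑e) * ((n:ℝ) * Real.exp (-s * (↑e/↑n) + s^2/2))
                = (n:ℝ) * (Real.exp (s * ↑e) * Real.exp (-s * (↑e/↑n) + s^2/2)) by ring,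
              ← Real.exp_add, mul_assoc, ← Real.exp_add]
            congr 1
            congr 1
            rw [hq]
            field_simp
            ring
    have hgeom : ∑ i ∈ Finset.range (m+1), q ^ (2 * i)
        = 1 + q ^ 2 * ∑ i ∈ Finset.range m, q ^ (2 * i) := by
      rw [Finset.sum_range_succ']
      rw [Finset.sum_congr rfl (fun i _ => show q ^ (2 * (i+1)) = q ^ 2 * q ^ (2 * i) by
        rw [← pow_add]; congr 1; ring)]
      rw [← Finset.mul_sum]
      simp [add_comm]
    calc ∑ f : Fin (m+1) → Fin n,
        Real.exp (s * ((Finset.univ.filter (fun j : Fin n => ∀ t : Fin (m+1), f t ≠ j)).card : ℝ))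
        = ∑ g : Fin m → Fin n, ∑ x : Fin n,
            Real.exp (s * (((E g).erase x).card : ℝ)) := hsum
      _ ≤ ∑ g : Fin m → Fin n,
            (n : ℝ) * Real.exp (s ^ 2 / 2) * Real.exp ((s * q) * ((E g).card : ℝ)) :=
          Finset.sum_le_sum fun g _ => inner_bound g
      _ = (n : ℝ) * Real.exp (s ^ 2 / 2)
            * ∑ g : Fin m → Fin n, Real.exp ((s * q) * ((E g).card : ℝ)) := by
          rw [Finset.mul_sum]
      _ ≤ (n : ℝ) * Real.exp (s ^ 2 / 2)
            * ((n : ℝ) ^ m * Real.exp ((s * q) * n * q ^ m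
                + (s * q) ^ 2 / 2 * ∑ i ∈ Finset.range m, q ^ (2 * i))) := by
          refine mul_le_mul_of_nonneg_left (ih (s * q)) (by positivity)
      _ = (n : ℝ) ^ (m+1) * Real.exp (s * n * q ^ (m+1)
            + s ^ 2 / 2 * ∑ i ∈ Finset.range (m+1), q ^ (2 * i)) := by
          rw [hgeom]
          rw [show (n:ℝ) * Real.exp (s^2/2) * ((n:ℝ)^m * Real.exp ((s*q) * n * q^m
              + (s*q)^2/2 * ∑ i ∈ Finset.range m, q^(2*i)))
            = (n:ℝ)^(m+1) * (Real.exp (s^2/2) * Real.exp ((s*q) * n * q^m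
              + (s*q)^2/2 * ∑ i ∈ Finset.range m, q^(2*i))) by rw [pow_succ]; ring,
            ← Real.exp_add]
          congr 1
          congr 1
          rw [pow_succ]
          ring

lemma card_filter_le_sum {α : Type*} [Fintype α] (P : α → Prop) [DecidablePred P] (u : α → ℝ)
    (h0 : ∀ f, 0 ≤ u f) (h1 : ∀ f, P f → 1 ≤ u f) :
    ((Finset.univ.filter P).card : ℝ) ≤ ∑ f, u f := by
  calc ((Finset.univ.filter P).card : ℝ) = ∑ _f ∈ Finset.univ.filter P, (1:ℝ) := by simp
    _ ≤ ∑ f ∈ Finset.univ.filter P, u f :=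
        Finset.sum_le_sum fun f hf => h1 f (Finset.mem_filter.1 hf).2
    _ ≤ ∑ f, u f :=
        Finset.sum_le_sum_of_subset_of_nonneg (Finset.subset_univ _) fun f _ _ => h0 f

/-- Occupancy concentration bound (Kamath–Motwani–Palem–Spirakis).
Throw `m` balls independently and uniformly at random into `n` bins (a uniformly random
function `f : Fin m → Fin n`, uniform measure on the finite function space, so the
probability of an event is the number of functions in it divided by `n^m`).
Let `Y f` be the number of empty bins and `μ = E[Y] = n * (1 - 1/n)^m`.  Then for every
real `λ > 0`, `Pr[|Y - μ| ≥ λ] ≤ 2 * exp(-(λ² (n-1)/2) / (n² - μ²))`. -/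
theorem balls_in_bins_empty_bins_concentration (m n : ℕ) (hn : 2 ≤ n) (hm : 1 ≤ m)
    (Y : (Fin m → Fin n) → ℕ)
    (hY : ∀ f, Y f = (Finset.univ.filter (fun j : Fin n => ∀ t : Fin m, f t ≠ j)).card)
    (μ : ℝ) (hμ : μ = (n : ℝ) * (1 - 1 / (n : ℝ)) ^ m)
    (lam : ℝ) (hlam : 0 < lam) :
    ((Finset.univ.filter (fun f : Fin m → Fin n => lam ≤ |(Y f : ℝ) - μ|)).card : ℝ)
        / (n : ℝ) ^ m
      ≤ 2 * Real.exp (-(lam ^ 2 * ((n : ℝ) - 1) / 2) / ((n : ℝ) ^ 2 - μ ^ 2)) := by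
  have hn1 : 1 ≤ n := by omega
  have hn0 : (0:ℝ) < n := by exact_mod_cast hn1
  set q : ℝ := 1 - 1/(n:ℝ) with hq
  have hq0 : 0 ≤ q := by
    rw [hq, sub_nonneg, div_le_one hn0]; exact_mod_cast hn1
  set G : ℝ := ∑ i ∈ Finset.range m, q ^ (2 * i) with hG
  have hG1 : 1 ≤ G := by
    rw [hG]
    have h0 : q ^ (2 * 0) = 1 := by norm_num
    calc (1:ℝ) = q ^ (2 * 0) := h0.symm
      _ ≤ ∑ i ∈ Finset.range m, q ^ (2 * i) :=
          Finset.single_le_sum (f := fun i => q ^ (2 * i)) (fun i _ => by positivity)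
            (Finset.mem_range.2 hm)
  have hGpos : 0 < G := lt_of_lt_of_le one_pos hG1
  set s : ℝ := lam / G with hs
  have hspos : 0 < s := div_pos hlam hGpos
  -- the MGF bounds
  have hmgf_pos := mgf_bound n hn1 m s
  have hmgf_neg := mgf_bound n hn1 m (-s)
  have hYcast : ∀ f : Fin m → Fin n,
      ((Finset.univ.filter (fun j : Fin n => ∀ t : Fin m, f t ≠ j)).card : ℝ) = (Y f : ℝ) := by
    intro f; rw [hY f]
  rw [Finset.sum_congr rfl (fun f _ => by rw [hYcast f])] at hmgf_pos hmgf_neg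
  have hμq : μ = (n:ℝ) * q ^ m := hμ
  -- upper tail
  have upper : ((Finset.univ.filter (fun f : Fin m → Fin n => μ + lam ≤ (Y f : ℝ))).card : ℝ)
      ≤ (n:ℝ) ^ m * Real.exp (-s * lam + s ^ 2 / 2 * G) := by
    have h1 := card_filter_le_sum (fun f : Fin m → Fin n => μ + lam ≤ (Y f : ℝ))
      (fun f => Real.exp (s * (Y f : ℝ) - s * (μ + lam)))
      (fun f => (Real.exp_pos _).le)
      (fun f hf => by
        rw [show (1:ℝ) = Real.exp 0 by simp]
        exact Real.exp_le_exp.2 (by nlinarith))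
    calc ((Finset.univ.filter (fun f : Fin m → Fin n => μ + lam ≤ (Y f : ℝ))).card : ℝ)
        ≤ ∑ f : Fin m → Fin n, Real.exp (s * (Y f : ℝ) - s * (μ + lam)) := h1
      _ = (∑ f : Fin m → Fin n, Real.exp (s * (Y f : ℝ))) * Real.exp (-(s * (μ + lam))) := by
          rw [Finset.sum_mul]
          exact Finset.sum_congr rfl fun f _ => by
            rw [sub_eq_add_neg, Real.exp_add]
      _ ≤ ((n:ℝ) ^ m * Real.exp (s * n * q ^ m + s ^ 2 / 2 * G)) * Real.exp (-(s * (μ + lam))) :=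
          mul_le_mul_of_nonneg_right hmgf_pos (Real.exp_pos _).le
      _ = (n:ℝ) ^ m * Real.exp (-s * lam + s ^ 2 / 2 * G) := by
          rw [mul_assoc, ← Real.exp_add]
          congr 2
          rw [hμq]; ring
  -- lower tail
  have lower : ((Finset.univ.filter (fun f : Fin m → Fin n => (Y f : ℝ) ≤ μ - lam)).card : ℝ)
      ≤ (n:ℝ) ^ m * Real.exp (-s * lam + s ^ 2 / 2 * G) := by
    have h1 := card_filter_le_sum (fun f : Fin m → Fin n => (Y f : ℝ) ≤ μ - lam)
      (fun f => Real.exp ((-s) * (Y f : ℝ) + s * (μ - lam)))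
      (fun f => (Real.exp_pos _).le)
      (fun f hf => by
        rw [show (1:ℝ) = Real.exp 0 by simp]
        exact Real.exp_le_exp.2 (by nlinarith))
    calc ((Finset.univ.filter (fun f : Fin m → Fin n => (Y f : ℝ) ≤ μ - lam)).card : ℝ)
        ≤ ∑ f : Fin m → Fin n, Real.exp ((-s) * (Y f : ℝ) + s * (μ - lam)) := h1
      _ = (∑ f : Fin m → Fin n, Real.exp ((-s) * (Y f : ℝ))) * Real.exp (s * (μ - lam)) := by
          rw [Finset.sum_mul]
          exact Finset.sum_congr rfl fun f _ => by rw [← Real.exp_add]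
      _ ≤ ((n:ℝ) ^ m * Real.exp ((-s) * n * q ^ m + (-s) ^ 2 / 2 * G)) * Real.exp (s * (μ - lam)) :=
          mul_le_mul_of_nonneg_right hmgf_neg (Real.exp_pos _).le
      _ = (n:ℝ) ^ m * Real.exp (-s * lam + s ^ 2 / 2 * G) := by
          rw [mul_assoc, ← Real.exp_add]
          congr 2
          rw [hμq]; ring
  -- union bound
  have hsubset : (Finset.univ.filter (fun f : Fin m → Fin n => lam ≤ |(Y f : ℝ) - μ|))
      ⊆ (Finset.univ.filter (fun f : Fin m → Fin n => μ + lam ≤ (Y f : ℝ)))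
        ∪ (Finset.univ.filter (fun f : Fin m → Fin n => (Y f : ℝ) ≤ μ - lam)) := by
    intro f hf
    rw [Finset.mem_filter] at hf
    rcases le_abs.1 hf.2 with h | h
    · exact Finset.mem_union_left _ (Finset.mem_filter.2 ⟨Finset.mem_univ _, by linarith⟩)
    · exact Finset.mem_union_right _ (Finset.mem_filter.2 ⟨Finset.mem_univ _, by linarith⟩)
  have hcard : ((Finset.univ.filter (fun f : Fin m → Fin n => lam ≤ |(Y f : ℝ) - μ|)).card : ℝ)
      ≤ 2 * ((n:ℝ) ^ m * Real.exp (-s * lam + s ^ 2 / 2 * G)) := by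
    have h1 := Finset.card_le_card hsubset
    have h2 := Finset.card_union_le
      (Finset.univ.filter (fun f : Fin m → Fin n => μ + lam ≤ (Y f : ℝ)))
      (Finset.univ.filter (fun f : Fin m → Fin n => (Y f : ℝ) ≤ μ - lam))
    have h3 : ((Finset.univ.filter (fun f : Fin m → Fin n => lam ≤ |(Y f : ℝ) - μ|)).card : ℝ)
        ≤ ((Finset.univ.filter (fun f : Fin m → Fin n => μ + lam ≤ (Y f : ℝ))).card : ℝ)
          + ((Finset.univ.filter (fun f : Fin m → Fin n => (Y f : ℝ) ≤ μ - lam)).card : ℝ) := by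
      exact_mod_cast le_trans h1 h2
    linarith
  -- exponent simplification and comparison
  have hexp_eq : -s * lam + s ^ 2 / 2 * G = -(lam ^ 2) / (2 * G) := by
    rw [hs]; field_simp; ring
  have hden : (n:ℝ) ^ 2 - μ ^ 2 = (2 * n - 1) * G := by
    have hgeom : G * (q ^ 2 - 1) = (q ^ 2) ^ m - 1 := by
      rw [hG, Finset.sum_congr rfl (fun i _ => (pow_mul q 2 i : q ^ (2*i) = (q^2)^i))]
      exact geom_sum_mul (q^2) m
    have hqm : μ ^ 2 = (n:ℝ) ^ 2 * (q ^ 2) ^ m := by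
      rw [hμq, mul_pow, ← pow_mul, ← pow_mul, Nat.mul_comm]
    have hnq : (n:ℝ) * q = (n:ℝ) - 1 := by
      rw [hq]; field_simp
    linear_combination (-1:ℝ) * hqm + (n:ℝ)^2 * hgeom - G * ((n:ℝ) * q + (n:ℝ) - 1) * hnq
  have h2n1 : (0:ℝ) < 2 * (n:ℝ) - 1 := by
    have : (1:ℝ) ≤ (n:ℝ) := by exact_mod_cast hn1
    linarith
  have hcomp : -(lam ^ 2) / (2 * G) ≤ -(lam ^ 2 * ((n : ℝ) - 1) / 2) / ((n : ℝ) ^ 2 - μ ^ 2) := by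
    rw [hden, neg_div, neg_div, neg_le_neg_iff]
    rw [div_le_div_iff₀ (mul_pos h2n1 hGpos) (by positivity)]
    have h2 : (2:ℝ) ≤ (n:ℝ) := by exact_mod_cast hn
    have hkey : 0 ≤ lam ^ 2 * (n:ℝ) * G := by positivity
    nlinarith [hkey]
  -- conclude
  rw [div_le_iff₀ (by positivity)]
  calc ((Finset.univ.filter (fun f : Fin m → Fin n => lam ≤ |(Y f : ℝ) - μ|)).card : ℝ)
      ≤ 2 * ((n:ℝ) ^ m * Real.exp (-s * lam + s ^ 2 / 2 * G)) := hcard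
    _ = 2 * Real.exp (-(lam ^ 2) / (2 * G)) * (n:ℝ) ^ m := by rw [hexp_eq]; ring
    _ ≤ 2 * Real.exp (-(lam ^ 2 * ((n : ℝ) - 1) / 2) / ((n : ℝ) ^ 2 - μ ^ 2)) * (n:ℝ) ^ m := by
        have h := Real.exp_le_exp.2 hcomp
        exact mul_le_mul_of_nonneg_right
          (mul_le_mul_of_nonneg_left h (by norm_num)) (le_of_lt (pow_pos hn0 m))
end

section
/- For integers k ≥ 2 and s ≥ 1, define P(k, s) = Σ_{m=0}^{∞} (1/k)·(1 − 1/k)^m · E[(1 − 1/s)^{NZ(m, k−1)}], where NZ(m, k−1) is the number of nonempty bins when m balls are thrown independently and uniformly at random into k−1 bins. Then there exist positive constants ε and δ and a threshold k₀ such that for all integers k ≥ k₀ and s ≥ 1 with k/s ≥ ε, one has P(k, s) ≤ 1 − δ. -/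
lemma card_avoid (m n : ℕ) (i : Fin n) :
    (Finset.univ.filter (fun f : Fin m → Fin n => ∀ j, f j ≠ i)).card = (n-1)^m := by
  rw [← Fintype.card_subtype]
  rw [Fintype.card_congr (Equiv.subtypePiEquivPi (p := fun _ b => b ≠ i))]
  rw [Fintype.card_pi]
  simp [Fintype.card_subtype_compl]

lemma sum_nonimage (m n : ℕ) :
    ∑ f : Fin m → Fin n, (n - (Finset.univ.image f).card) = n * (n-1)^m := by
  have h1 : ∀ f : Fin m → Fin n, n - (Finset.univ.image f).card
      = ∑ i : Fin n, if ∀ j, f j ≠ i then 1 else 0 := by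
    intro f
    rw [← Finset.card_filter]
    have : (Finset.univ.filter (fun i : Fin n => ∀ j, f j ≠ i))
        = Finset.univ \ Finset.univ.image f := by
      ext i
      simp [Finset.mem_image, eq_comm]
    rw [this, Finset.card_sdiff_of_subset (Finset.subset_univ _)]
    simp
  simp_rw [h1]
  rw [Finset.sum_comm]
  have : ∀ i : Fin n, ∑ f : Fin m → Fin n, (if ∀ j, f j ≠ i then 1 else 0) = (n-1)^m := by
    intro i
    rw [← Finset.card_filter]
    exact card_avoid m n i
  simp_rw [this]
  simp [mul_comm]

lemma b_bound (n s m : ℕ) (hn : 1 ≤ n) (hs : 1 ≤ s) (hsn : 4*s ≤ n+1) (hm : 4*n ≤ m)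
    (x : ℝ) (hx0 : 0 ≤ x) (hx1 : x ≤ 1) (hxs : x ^ s ≤ 1/2) :
    (∑ f : Fin m → Fin n, x ^ (Finset.univ.image f).card)
      ≤ 3/4 * (n:ℝ)^m := by
  have hsle : s ≤ n := by omega
  classical
  set A : Finset (Fin m → Fin n) :=
    Finset.univ.filter (fun f => (Finset.univ.image f).card < s) with hA
  have hcardtot : (Finset.univ : Finset (Fin m → Fin n)).card = n ^ m := by
    simp [Fintype.card_fun]
  -- Markov in ℕ
  have hmarkov : (n + 1 - s) * A.card ≤ n * (n-1)^m := by
    calc (n + 1 - s) * A.card = ∑ _f ∈ A, (n + 1 - s) := by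
          rw [Finset.sum_const, smul_eq_mul, mul_comm]
      _ ≤ ∑ f ∈ A, (n - (Finset.univ.image f).card) := by
          apply Finset.sum_le_sum
          intro f hf
          rw [hA, Finset.mem_filter] at hf
          have hcle : (Finset.univ.image f).card ≤ n := by
            simpa using Finset.card_le_card (Finset.subset_univ (Finset.univ.image f))
          omega
      _ ≤ ∑ f : Fin m → Fin n, (n - (Finset.univ.image f).card) :=
          Finset.sum_le_sum_of_subset (Finset.subset_univ _)
      _ = n * (n-1)^m := sum_nonimage m n
  -- real key inequality
  have hn0 : (0:ℝ) < n := by positivity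
  have hexp2 : (2:ℝ) ≤ Real.exp 1 := by
    have := Real.add_one_le_exp 1; linarith
  have hpow : ((n-1:ℕ):ℝ)^m ≤ Real.exp (-4) * (n:ℝ)^m := by
    have hcast : ((n-1:ℕ):ℝ) = (n:ℝ) - 1 := by
      have : (1:ℕ) ≤ n := hn
      push_cast [this]; ring
    have h1 : (n:ℝ) - 1 = (n:ℝ) * (1 - 1/(n:ℝ)) := by field_simp
    have h2 : (0:ℝ) ≤ 1 - 1/(n:ℝ) := by
      have : 1/(n:ℝ) ≤ 1 := by rw [div_le_one hn0]; exact_mod_cast hn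
      linarith
    have h3 : 1 - 1/(n:ℝ) ≤ Real.exp (-(1/(n:ℝ))) := by
      have := Real.add_one_le_exp (-(1/(n:ℝ))); linarith
    have h4 : (1 - 1/(n:ℝ))^m ≤ Real.exp (-(1/(n:ℝ)))^m := pow_le_pow_left₀ h2 h3 m
    have h5 : Real.exp (-(1/(n:ℝ)))^m = Real.exp (-(m/(n:ℝ))) := by
      rw [← Real.exp_nat_mul]; congr 1; field_simp
    have h6 : Real.exp (-((m:ℝ)/(n:ℝ))) ≤ Real.exp (-4) := by
      apply Real.exp_le_exp.mpr
      have : (4:ℝ) ≤ (m:ℝ)/(n:ℝ) := by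
        rw [le_div_iff₀ hn0]
        exact_mod_cast (by linarith [hm] : 4*n ≤ m)
      linarith
    calc ((n-1:ℕ):ℝ)^m = ((n:ℝ) * (1 - 1/(n:ℝ)))^m := by rw [hcast, h1]
      _ = (n:ℝ)^m * (1 - 1/(n:ℝ))^m := mul_pow _ _ _
      _ ≤ (n:ℝ)^m * Real.exp (-4) := by
          apply mul_le_mul_of_nonneg_left _ (by positivity)
          calc (1 - 1/(n:ℝ))^m ≤ Real.exp (-(1/(n:ℝ)))^m := h4
            _ = Real.exp (-((m:ℝ)/(n:ℝ))) := by rw [h5]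
            _ ≤ Real.exp (-4) := h6
      _ = Real.exp (-4) * (n:ℝ)^m := mul_comm _ _
  have hexp4 : Real.exp (-4) ≤ 3/16 := by
    rw [Real.exp_neg]
    have h16 : (16:ℝ) ≤ Real.exp 4 := by
      have h24 : (2:ℝ)^4 ≤ (Real.exp 1)^4 := pow_le_pow_left₀ (by norm_num) hexp2 4
      have : Real.exp 4 = (Real.exp 1)^4 := by
        rw [← Real.exp_nat_mul]; norm_num
      rw [this]; nlinarith
    rw [inv_le_comm₀ (by positivity) (by norm_num)]
    linarith
  -- A.card ≤ (1/4) n^m  in ℝ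
  have hns : (0:ℝ) < ((n+1-s : ℕ):ℝ) := by
    have : 1 ≤ n + 1 - s := by omega
    exact_mod_cast Nat.lt_of_lt_of_le Nat.zero_lt_one this
  have hns34 : (3/4) * (n:ℝ) ≤ ((n+1-s : ℕ):ℝ) := by
    have hc : ((n+1-s : ℕ):ℝ) = (n:ℝ) + 1 - (s:ℝ) := by
      have : s ≤ n + 1 := by omega
      push_cast [this]; ring
    have hs4 : 4*(s:ℝ) ≤ (n:ℝ)+1 := by exact_mod_cast hsn
    rw [hc]; linarith
  have hAcard : (A.card : ℝ) ≤ (1/4) * (n:ℝ)^m := by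
    have h1 : ((n+1-s : ℕ):ℝ) * A.card ≤ (n:ℝ) * ((n-1:ℕ):ℝ)^m := by
      exact_mod_cast hmarkov
    have h2 : (n:ℝ) * ((n-1:ℕ):ℝ)^m ≤ (3/16) * ((n:ℝ) * (n:ℝ)^m) := by
      calc (n:ℝ) * ((n-1:ℕ):ℝ)^m ≤ (n:ℝ) * (Real.exp (-4) * (n:ℝ)^m) :=
            mul_le_mul_of_nonneg_left hpow (le_of_lt hn0)
        _ = Real.exp (-4) * ((n:ℝ) * (n:ℝ)^m) := by ring
        _ ≤ (3/16) * ((n:ℝ) * (n:ℝ)^m) := mul_le_mul_of_nonneg_right hexp4 (by positivity)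
    have h3 : ((n+1-s : ℕ):ℝ) * A.card ≤ (1/4) * (((n+1-s : ℕ):ℝ) * (n:ℝ)^m) := by
      calc ((n+1-s : ℕ):ℝ) * A.card ≤ (3/16) * ((n:ℝ) * (n:ℝ)^m) := le_trans h1 h2
        _ ≤ (1/4) * (((n+1-s : ℕ):ℝ) * (n:ℝ)^m) := by nlinarith [pow_pos hn0 m]
    have := (mul_le_mul_iff_right₀ hns).mp (by linarith [h3] : ((n+1-s:ℕ):ℝ) * (A.card:ℝ) ≤ ((n+1-s:ℕ):ℝ) * ((1/4) * (n:ℝ)^m))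
    linarith
  -- split the sum
  rw [← Finset.sum_filter_add_sum_filter_not Finset.univ (fun f => (Finset.univ.image f).card < s)]
  have hpart1 : ∑ f ∈ A, x ^ (Finset.univ.image f).card ≤ (A.card : ℝ) := by
    calc ∑ f ∈ A, x ^ (Finset.univ.image f).card ≤ ∑ _f ∈ A, (1:ℝ) :=
          Finset.sum_le_sum (fun f _ => pow_le_one₀ hx0 hx1)
      _ = A.card := by simp
  have hpart2 : ∑ f ∈ Finset.univ.filter (fun f : Fin m → Fin n => ¬ (Finset.univ.image f).card < s),
      x ^ (Finset.univ.image f).card ≤ (n:ℝ)^m * (1/2) := by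
    calc ∑ f ∈ Finset.univ.filter (fun f : Fin m → Fin n => ¬ (Finset.univ.image f).card < s),
        x ^ (Finset.univ.image f).card
        ≤ ∑ _f ∈ Finset.univ.filter (fun f : Fin m → Fin n => ¬ (Finset.univ.image f).card < s), x ^ s := by
          apply Finset.sum_le_sum
          intro f hf
          rw [Finset.mem_filter] at hf
          exact pow_le_pow_of_le_one hx0 hx1 (le_of_not_gt hf.2)
      _ = (Finset.univ.filter (fun f : Fin m → Fin n => ¬ (Finset.univ.image f).card < s)).card * x^s := by
          rw [Finset.sum_const, nsmul_eq_mul]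
      _ ≤ (n:ℝ)^m * (1/2) := by
          apply mul_le_mul _ hxs (by positivity) (by positivity)
          have : (Finset.univ.filter (fun f : Fin m → Fin n => ¬ (Finset.univ.image f).card < s)).card ≤ n^m := by
            rw [← hcardtot]
            exact Finset.card_le_card (Finset.filter_subset _ _)
          exact_mod_cast this
  calc ∑ f ∈ A, x ^ (Finset.univ.image f).card
        + ∑ f ∈ Finset.univ.filter (fun f : Fin m → Fin n => ¬ (Finset.univ.image f).card < s),
            x ^ (Finset.univ.image f).card
      ≤ (1/4) * (n:ℝ)^m + (n:ℝ)^m * (1/2) := by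
        have := le_trans hpart1 hAcard
        linarith
    _ = 3/4 * (n:ℝ)^m := by ring

lemma xs_half (s : ℕ) (hs : 1 ≤ s) : (1 - 1/(s:ℝ))^s ≤ 1/2 := by
  have hs0 : (0:ℝ) < s := by positivity
  have hx0 : (0:ℝ) ≤ 1 - 1/(s:ℝ) := by
    have : 1/(s:ℝ) ≤ 1 := by rw [div_le_one hs0]; exact_mod_cast hs
    linarith
  have h1 : 1 - 1/(s:ℝ) ≤ Real.exp (-(1/(s:ℝ))) := by
    have := Real.add_one_le_exp (-(1/(s:ℝ))); linarith
  have hexp2 : (2:ℝ) ≤ Real.exp 1 := by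
    have := Real.add_one_le_exp 1; linarith
  calc (1 - 1/(s:ℝ)) ^ s ≤ Real.exp (-(1/(s:ℝ))) ^ s := pow_le_pow_left₀ hx0 h1 s
    _ = Real.exp (-(1/(s:ℝ)) * s) := by rw [← Real.exp_nat_mul]; ring_nf
    _ = Real.exp (-1) := by congr 1; field_simp
    _ ≤ 1/2 := by
      rw [Real.exp_neg, inv_le_comm₀ (Real.exp_pos 1) (by norm_num)]
      linarith

set_option maxHeartbeats 1000000 in
/-- Lemma 4.1 of the paper (existence of constants `ε, δ`).  For integers `k ≥ 2` and
`s ≥ 1`, let `P(k, s) = ∑_{m=0}^∞ (1/k)·(1 - 1/k)^m · E[(1 - 1/s)^{NZ(m, k-1)}]`, where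
`NZ(m, k-1)` is the number of nonempty bins when `m` balls are thrown independently and
uniformly at random into `k-1` bins (a uniformly random function `f : Fin m → Fin (k-1)`,
so the expectation is the average over all `(k-1)^m` functions).  Then there exist
positive constants `ε`, `δ` and a threshold `k₀` such that for all integers `k ≥ k₀` and
`s ≥ 1` with `k/s ≥ ε`, one has `P(k, s) ≤ 1 - δ`. -/
theorem mergesort_conflict_prob_bound :
    ∃ ε : ℝ, 0 < ε ∧ ∃ δ : ℝ, 0 < δ ∧ ∃ k₀ : ℕ,
      ∀ k s : ℕ, k₀ ≤ k → 1 ≤ s → ε ≤ (k : ℝ) / (s : ℝ) →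
        (∑' m : ℕ, (1 / (k : ℝ)) * (1 - 1 / (k : ℝ)) ^ m *
            ((∑ f : Fin m → Fin (k - 1), (1 - 1 / (s : ℝ)) ^ (Finset.univ.image f).card)
              / ((k - 1 : ℕ) : ℝ) ^ m))
          ≤ 1 - δ := by
  refine ⟨4, by norm_num, 1/2^14, by norm_num, 16, ?_⟩
  intro k s hk hs hks
  have hs0 : (0:ℝ) < s := by positivity
  have hk0 : (0:ℝ) < k := by positivity
  have hsk : 4*s ≤ k := by
    have : 4*(s:ℝ) ≤ k := by
      rw [le_div_iff₀ hs0] at hks; linarith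
    exact_mod_cast this
  have hn1 : 1 ≤ k - 1 := by omega
  -- basic facts about x and r
  set x : ℝ := 1 - 1/(s:ℝ) with hxdef
  have hx0 : 0 ≤ x := by
    have : 1/(s:ℝ) ≤ 1 := by rw [div_le_one hs0]; exact_mod_cast hs
    rw [hxdef]; linarith
  have hx1 : x ≤ 1 := by
    have : 0 ≤ 1/(s:ℝ) := by positivity
    rw [hxdef]; linarith
  set q : ℝ := 1/(k:ℝ) with hqdef
  set r : ℝ := 1 - 1/(k:ℝ) with hrdef
  have hq0 : 0 < q := by rw [hqdef]; positivity
  have hr0 : 0 ≤ r := by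
    have : 1/(k:ℝ) ≤ 1 := by rw [div_le_one hk0]; norm_num; omega
    rw [hrdef]; linarith
  have hr1 : r < 1 := by
    have : 0 < 1/(k:ℝ) := by positivity
    rw [hrdef]; linarith
  have hgeo : Summable (fun m : ℕ => q * r ^ m) :=
    (summable_geometric_of_lt_one hr0 hr1).mul_left q
  have hgeo_tsum : ∑' m : ℕ, q * r ^ m = 1 := by
    rw [tsum_mul_left, tsum_geometric_of_lt_one hr0 hr1]
    rw [hqdef, hrdef]
    field_simp
    ring
  -- the B terms
  set B : (m : ℕ) → ℝ := fun m =>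
    (∑ f : Fin m → Fin (k - 1), x ^ (Finset.univ.image f).card) with hBdef
  have hnm_pos : ∀ m : ℕ, (0:ℝ) < ((k - 1 : ℕ) : ℝ) ^ m := by
    intro m
    have : (0:ℝ) < ((k-1:ℕ):ℝ) := by exact_mod_cast hn1
    positivity
  have hB0 : ∀ m, 0 ≤ B m := by
    intro m
    apply Finset.sum_nonneg
    intro f _
    positivity
  have hB1 : ∀ m, B m ≤ ((k - 1 : ℕ) : ℝ) ^ m := by
    intro m
    calc B m ≤ ∑ _f : Fin m → Fin (k-1), (1:ℝ) :=
          Finset.sum_le_sum (fun f _ => pow_le_one₀ hx0 hx1)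
      _ = ((k-1)^m : ℕ) := by
          rw [Finset.sum_const, Finset.card_univ, Fintype.card_fun]
          simp
      _ = ((k - 1 : ℕ) : ℝ) ^ m := by push_cast; ring
  -- pointwise bound by h m
  set g : (m : ℕ) → ℝ := fun m => if 4*k ≤ m then (1/4) * (q * r ^ m) else 0 with hgdef
  have hg0 : ∀ m, 0 ≤ g m := by
    intro m
    rw [hgdef]
    dsimp only
    split <;> positivity
  have hgle : ∀ m, g m ≤ q * r ^ m := by
    intro m
    rw [hgdef]
    dsimp only
    split
    · nlinarith [hq0, pow_nonneg hr0 m]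
    · positivity
  have hgsum : Summable g := Summable.of_nonneg_of_le hg0 hgle hgeo
  have hterm : ∀ m : ℕ,
      q * r ^ m * (B m / ((k - 1 : ℕ) : ℝ) ^ m) ≤ q * r ^ m - g m := by
    intro m
    have hqr : 0 ≤ q * r ^ m := by positivity
    by_cases hm : 4*k ≤ m
    · have hb34 : B m ≤ 3/4 * ((k - 1 : ℕ) : ℝ)^m := by
        apply b_bound (k-1) s m hn1 hs (by omega) (by omega) x hx0 hx1
        rw [hxdef]; exact xs_half s hs
      have : B m / ((k - 1 : ℕ) : ℝ) ^ m ≤ 3/4 := by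
        rw [div_le_iff₀ (hnm_pos m)]; linarith
      have h2 : q * r ^ m * (B m / ((k - 1 : ℕ) : ℝ) ^ m) ≤ q * r ^ m * (3/4) := by
        apply mul_le_mul_of_nonneg_left this hqr
      rw [hgdef]
      simp only [if_pos hm]
      linarith
    · have : B m / ((k - 1 : ℕ) : ℝ) ^ m ≤ 1 := by
        rw [div_le_one (hnm_pos m)]; exact hB1 m
      have h2 : q * r ^ m * (B m / ((k - 1 : ℕ) : ℝ) ^ m) ≤ q * r ^ m * 1 := by
        apply mul_le_mul_of_nonneg_left this hqr
      rw [hgdef]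
      simp only [if_neg hm]
      linarith
  have htermpos : ∀ m : ℕ, 0 ≤ q * r ^ m * (B m / ((k - 1 : ℕ) : ℝ) ^ m) := by
    intro m
    have := hB0 m
    have := (hnm_pos m)
    positivity
  have hsumf : Summable (fun m : ℕ => q * r ^ m * (B m / ((k - 1 : ℕ) : ℝ) ^ m)) := by
    apply Summable.of_nonneg_of_le htermpos (fun m => le_trans (hterm m) ?_) hgeo
    have := hg0 m
    linarith
  -- tsum of g
  have hgtsum : ∑' m, g m = (1/4) * r ^ (4*k) := by
    have hshift := Summable.sum_add_tsum_nat_add (f := g) (4*k) hgsum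
    have hzero : ∑ i ∈ Finset.range (4*k), g i = 0 := by
      apply Finset.sum_eq_zero
      intro i hi
      rw [Finset.mem_range] at hi
      rw [hgdef]
      simp only [if_neg (by omega : ¬ 4*k ≤ i)]
    have hgs : ∀ i : ℕ, g (i + 4*k) = ((1/4) * q * r^(4*k)) * r ^ i := by
      intro i
      rw [hgdef]
      simp only [if_pos (by omega : 4*k ≤ i + 4*k)]
      rw [pow_add]
      ring
    rw [hzero, zero_add] at hshift
    rw [← hshift]
    rw [tsum_congr hgs, tsum_mul_left, tsum_geometric_of_lt_one hr0 hr1]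
    have : (1 - r)⁻¹ = (k:ℝ) := by
      rw [hrdef]; field_simp; ring
    rw [this, hqdef]
    field_simp
  -- final computation
  have hle : (∑' m : ℕ, q * r ^ m * (B m / ((k - 1 : ℕ) : ℝ) ^ m))
      ≤ ∑' m : ℕ, (q * r ^ m - g m) := by
    apply Summable.tsum_le_tsum hterm hsumf (hgeo.sub hgsum)
  have heq : ∑' m : ℕ, (q * r ^ m - g m) = 1 - (1/4) * r ^ (4*k) := by
    rw [Summable.tsum_sub hgeo hgsum, hgeo_tsum, hgtsum]
  have hk16 : (16:ℝ) ≤ (k:ℝ) := by exact_mod_cast hk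
  have hv0 : (0:ℝ) < 1/(k:ℝ) := by positivity
  have hv16 : 1/(k:ℝ) ≤ 1/16 := by
    rw [div_le_div_iff₀ hk0 (by norm_num)]; linarith
  have hrpos : 0 < r := by rw [hrdef]; linarith
  -- r ≥ exp(-2/k)
  have hrexp : Real.exp (-(2/(k:ℝ))) ≤ r := by
    have h1 : 1 + 2/(k:ℝ) ≤ Real.exp (2/(k:ℝ)) := by
      have := Real.add_one_le_exp (2/(k:ℝ)); linarith
    have e2 : (1:ℝ) ≤ (1 - 1/(k:ℝ)) * (1 + 2*(1/(k:ℝ))) := by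
      nlinarith [mul_nonneg hv0.le (by linarith : (0:ℝ) ≤ 1 - 2*(1/(k:ℝ)))]
    have key : 1 ≤ r * Real.exp (2/(k:ℝ)) := by
      have e3 : (1 - 1/(k:ℝ)) * (1 + 2*(1/(k:ℝ))) ≤ (1 - 1/(k:ℝ)) * Real.exp (2/(k:ℝ)) := by
        apply mul_le_mul_of_nonneg_left _ (by linarith)
        have : 2*(1/(k:ℝ)) = 2/(k:ℝ) := by ring
        rw [this]; exact h1
      rw [hrdef]; linarith
    have hmul : Real.exp (-(2/(k:ℝ))) * Real.exp (2/(k:ℝ)) = 1 := by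
      rw [← Real.exp_add]; simp
    apply le_of_mul_le_mul_right _ (Real.exp_pos (2/(k:ℝ)))
    rw [hmul]; exact key
  have hrpow : (1:ℝ)/2^12 ≤ r ^ (4*k) := by
    have e1 : Real.exp (-(2/(k:ℝ))) ^ (4*k) = Real.exp (-8) := by
      rw [← Real.exp_nat_mul]
      congr 1
      have hk0' : (k:ℝ) ≠ 0 := ne_of_gt hk0
      push_cast
      field_simp
      ring
    have e2 : Real.exp (-(2/(k:ℝ))) ^ (4*k) ≤ r ^ (4*k) :=
      pow_le_pow_left₀ (le_of_lt (Real.exp_pos _)) hrexp _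
    have e3 : (1:ℝ)/2^12 ≤ Real.exp (-8) := by
      rw [Real.exp_neg, div_le_iff₀ (by positivity), inv_mul_eq_div, le_div_iff₀ (Real.exp_pos _)]
      have h8 : Real.exp 8 = (Real.exp 1)^8 := by
        rw [← Real.exp_nat_mul]; norm_num
      have hd : Real.exp 1 ≤ 68/25 := by
        have := Real.exp_one_lt_d9
        norm_num at this ⊢
        linarith
      have hb : (Real.exp 1)^8 ≤ ((68:ℝ)/25)^8 :=
        pow_le_pow_left₀ (le_of_lt (Real.exp_pos 1)) hd 8
      have hc : ((68:ℝ)/25)^8 ≤ 2^12 := by norm_num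
      rw [h8]
      linarith
    rw [e1] at e2
    linarith
  calc (∑' m : ℕ, q * r ^ m * (B m / ((k - 1 : ℕ) : ℝ) ^ m))
      ≤ 1 - (1/4) * r ^ (4*k) := by rw [← heq]; exact hle
    _ ≤ 1 - 1/2^14 := by nlinarith
end

section
/- Let u < v ≤ w be natural numbers, and set B = 2^u, k = 2^{v−u}, and L = 2^w (so k divides L since v − u ≤ w). Let i and j be integers with 1 ≤ i ≤ k and 1 ≤ j ≤ k, and let a₁ and a₂ be arbitrary integers. If (i·B + a₁)·k + j ≡ (j·B + a₂)·k + i (mod L), then i = j. -/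
namespace Int.ModEq

variable {n a b : ℤ}

lemma eq_of_abs_sub_lt (h : a ≡ b [ZMOD n]) (hab : |b - a| < n) : a = b :=
  (sub_eq_zero.mp (Int.eq_zero_of_abs_lt_dvd h.dvd hab)).symm

lemma eq_of_one_le_of_le (h : a ≡ b [ZMOD n]) (ha₁ : 1 ≤ a) (ha : a ≤ n) (hb₁ : 1 ≤ b)
    (hb : b ≤ n) : a = b :=
  h.eq_of_abs_sub_lt (abs_sub_lt_iff.mpr ⟨by linarith, by linarith⟩)

lemma of_mul_add {m k x y : ℤ} (hk : k ∣ m) (h : x * k + a ≡ y * k + b [ZMOD m]) :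
    a ≡ b [ZMOD k] := by
  simpa using h.of_dvd hk

end Int.ModEq

theorem symmetric_submatrices_no_conflict_general (u v w : ℕ) (hvw : v ≤ w)
    (i j a₁ a₂ : ℤ) (hi1 : 1 ≤ i) (hik : i ≤ 2 ^ (v - u))
    (hj1 : 1 ≤ j) (hjk : j ≤ 2 ^ (v - u))
    (h : (i * 2 ^ u + a₁) * 2 ^ (v - u) + j
          ≡ (j * 2 ^ u + a₂) * 2 ^ (v - u) + i [ZMOD (2 ^ w)]) :
    i = j := by
  have hkL : (2 : ℤ) ^ (v - u) ∣ 2 ^ w := pow_dvd_pow 2 (by omega)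
  exact ((h.of_mul_add hkL).eq_of_one_le_of_le hj1 hjk hi1 hik).symm

/-- The key congruence in the multi-level matrix-transpose algorithm.  Let `u < v ≤ w`
be naturals and set `B = 2^u`, `k = 2^(v-u)`, `L = 2^w` (so `k ∣ L`).  If `1 ≤ i ≤ k`,
`1 ≤ j ≤ k` and, for some integers `a₁, a₂`,
`(i·B + a₁)·k + j ≡ (j·B + a₂)·k + i (mod L)`, then `i = j`; i.e. the symmetric
submatrices `S_{i,j}` and `S_{j,i}` with `i ≠ j` never conflict in the direct-mapped
cache with `L` lines. -/
theorem symmetric_submatrices_no_conflict (u v w : ℕ) (huv : u < v) (hvw : v ≤ w)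
    (i j a₁ a₂ : ℤ) (hi1 : 1 ≤ i) (hik : i ≤ 2 ^ (v - u))
    (hj1 : 1 ≤ j) (hjk : j ≤ 2 ^ (v - u))
    (h : (i * 2 ^ u + a₁) * 2 ^ (v - u) + j
          ≡ (j * 2 ^ u + a₂) * 2 ^ (v - u) + i [ZMOD (2 ^ w)]) :
    i = j :=
  symmetric_submatrices_no_conflict_general u v w hvw i j a₁ a₂ hi1 hik hj1 hjk h
end
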